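/- For every y ∈ ℝ, the bracket on the dual space su(2,y)* defined by [ω,θ](a) = (ω⊗θ)(δ_y(a)) is a Lie bracket (it is antisymmetric and satisfies the Jacobi identity), and on the dual basis it is given by [Ĵ1,Ĵ2] = Ĵ2, [Ĵ1,Ĵ3] = Ĵ3, [Ĵ2,Ĵ3] = 0. In particular the dual Lie algebra is independent of y. -/
import Mathlib


open TensorProduct Complex Matrix

noncomputable section

abbrev M2 : Type := Matrix (Fin 2) (Fin 2) ℂ

def J1 : M2 := !![Complex.I, 0; 0, -Complex.I]
def J2 (y : ℝ) : M2 := !![0, 1; -(y : ℂ), 0]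
def J3 (y : ℝ) : M2 := !![0, Complex.I; Complex.I * (y : ℂ), 0]

/-- The bracket on functionals defined by `[ω,θ](a) = (ω⊗θ)(δ(a))`. -/
def dualBr (δ : M2 →ₗ[ℝ] M2 ⊗[ℝ] M2) (ω θ : M2 →ₗ[ℝ] ℝ) : M2 →ₗ[ℝ] ℝ :=
  (TensorProduct.lid ℝ ℝ).toLinearMap ∘ₗ TensorProduct.map ω θ ∘ₗ δ

/-- the dual bracket `[ω,θ](a) = (ω⊗θ)(δ_y(a))` on `su(2,y)*` is a Lie bracket
(antisymmetric, Jacobi), and on the dual basis it is given by `[Ĵ1,Ĵ2] = Ĵ2`, `[Ĵ1,Ĵ3] = Ĵ3`,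
`[Ĵ2,Ĵ3] = 0`; in particular it is independent of `y`. -/
theorem statement1 (y : ℝ) (δ : M2 →ₗ[ℝ] M2 ⊗[ℝ] M2)
    (h1 : δ J1 = 0)
    (h2 : δ (J2 y) = J1 ⊗ₜ[ℝ] J2 y - J2 y ⊗ₜ[ℝ] J1)
    (h3 : δ (J3 y) = J1 ⊗ₜ[ℝ] J3 y - J3 y ⊗ₜ[ℝ] J1)
    (Jd₁ Jd₂ Jd₃ : M2 →ₗ[ℝ] ℝ)
    (hd11 : Jd₁ J1 = 1) (hd12 : Jd₁ (J2 y) = 0) (hd13 : Jd₁ (J3 y) = 0)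
    (hd21 : Jd₂ J1 = 0) (hd22 : Jd₂ (J2 y) = 1) (hd23 : Jd₂ (J3 y) = 0)
    (hd31 : Jd₃ J1 = 0) (hd32 : Jd₃ (J2 y) = 0) (hd33 : Jd₃ (J3 y) = 1) :
    (∀ ω θ : M2 →ₗ[ℝ] ℝ, ∀ a ∈ Submodule.span ℝ {J1, J2 y, J3 y},
      dualBr δ ω θ a = - dualBr δ θ ω a) ∧
    (∀ ω θ χ : M2 →ₗ[ℝ] ℝ, ∀ a ∈ Submodule.span ℝ {J1, J2 y, J3 y},
      dualBr δ (dualBr δ ω θ) χ a + dualBr δ (dualBr δ θ χ) ω a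
        + dualBr δ (dualBr δ χ ω) θ a = 0) ∧
    (∀ a ∈ Submodule.span ℝ {J1, J2 y, J3 y}, dualBr δ Jd₁ Jd₂ a = Jd₂ a) ∧
    (∀ a ∈ Submodule.span ℝ {J1, J2 y, J3 y}, dualBr δ Jd₁ Jd₃ a = Jd₃ a) ∧
    (∀ a ∈ Submodule.span ℝ {J1, J2 y, J3 y}, dualBr δ Jd₂ Jd₃ a = 0) := by

  have e1 : ∀ ω θ : M2 →ₗ[ℝ] ℝ, dualBr δ ω θ J1 = 0 := by
    intro ω θ
    simp only [dualBr, LinearMap.comp_apply, h1, _root_.map_zero]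
  have e2 : ∀ ω θ : M2 →ₗ[ℝ] ℝ,
      dualBr δ ω θ (J2 y) = ω J1 * θ (J2 y) - ω (J2 y) * θ J1 := by
    intro ω θ
    simp only [dualBr, LinearMap.comp_apply, h2, map_sub, TensorProduct.map_tmul,
      LinearEquiv.coe_coe, TensorProduct.lid_tmul, smul_eq_mul]
  have e3 : ∀ ω θ : M2 →ₗ[ℝ] ℝ,
      dualBr δ ω θ (J3 y) = ω J1 * θ (J3 y) - ω (J3 y) * θ J1 := by
    intro ω θ
    simp only [dualBr, LinearMap.comp_apply, h3, map_sub, TensorProduct.map_tmul,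
      LinearEquiv.coe_coe, TensorProduct.lid_tmul, smul_eq_mul]
  have vanish : ∀ f : M2 →ₗ[ℝ] ℝ, f J1 = 0 → f (J2 y) = 0 → f (J3 y) = 0 →
      ∀ a ∈ Submodule.span ℝ {J1, J2 y, J3 y}, f a = 0 := by
    intro f hf1 hf2 hf3 a ha
    induction ha using Submodule.span_induction with
    | mem x hx =>
      rcases hx with rfl | rfl | rfl
      · exact hf1
      · exact hf2
      · exact hf3
    | zero => simp
    | add u v _ _ hu hv => simp [hu, hv]
    | smul r u _ hu => simp [hu]
  refine ⟨?_, ?_, ?_, ?_, ?_⟩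
  · intro ω θ a ha
    have h := vanish (dualBr δ ω θ + dualBr δ θ ω)
      (by simp [e1]) (by simp [e2]; ring) (by simp [e3]; ring) a ha
    simp at h; linarith
  · intro ω θ χ a ha
    have h := vanish (dualBr δ (dualBr δ ω θ) χ + dualBr δ (dualBr δ θ χ) ω
        + dualBr δ (dualBr δ χ ω) θ)
      (by simp [e1]) (by simp [e1, e2]; ring) (by simp [e1, e3]; ring) a ha
    simp at h; linarith
  · intro a ha
    have h := vanish (dualBr δ Jd₁ Jd₂ - Jd₂)
      (by simp [e1, hd21]) (by simp [e2, hd11, hd12, hd21, hd22])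
      (by simp [e3, hd11, hd13, hd21, hd23]) a ha
    simp at h; linarith
  · intro a ha
    have h := vanish (dualBr δ Jd₁ Jd₃ - Jd₃)
      (by simp [e1, hd31]) (by simp [e2, hd11, hd12, hd31, hd32])
      (by simp [e3, hd11, hd13, hd31, hd33]) a ha
    simp at h; linarith
  · intro a ha
    exact vanish (dualBr δ Jd₂ Jd₃)
      (e1 _ _) (by simp [e2, hd21, hd22, hd31, hd32])
      (by simp [e3, hd21, hd23, hd31, hd33]) a ha
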